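/- arXiv:2010.14366 — 2 statements merged into one kernel-verified Lean document; each statement's English description precedes it below -/
import Mathlib

section
/- The τ-periodic function V_per defined by V_per(t) = 1 - γ e^{-r(t - nτ)} / (1 - (1 - γ)e^{-rτ}) for t ∈ [nτ, (n+1)τ) satisfies V_per'(t) = r(1 - V_per(t)) at every t not a multiple of τ, and satisfies the jump condition V_per(nτ⁺) = (1 - γ)V_per(nτ⁻) at every n ≥ 1. -/
open Set Filter Topology

noncomputable def Vper (r τ γ : ℝ) (t : ℝ) : ℝ :=
  1 - γ * Real.exp (-r * (t - (⌊t / τ⌋ : ℝ) * τ)) / (1 - (1 - γ) * Real.exp (-r * τ))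

theorem Vper_ode_and_jump
    (r τ γ : ℝ) (hr : 0 < r) (hτ : 0 < τ) (hγ : γ ∈ Ioc (0 : ℝ) 1) :
    (∀ t : ℝ, 0 ≤ t → (¬ ∃ n : ℕ, t = (n : ℝ) * τ) →
      HasDerivAt (Vper r τ γ) (r * (1 - Vper r τ γ t)) t) ∧
    (∀ n : ℕ, 1 ≤ n → ∃ Lm Lp : ℝ,
      Tendsto (Vper r τ γ) (𝓝[<] ((n : ℝ) * τ)) (𝓝 Lm) ∧
      Tendsto (Vper r τ γ) (𝓝[>] ((n : ℝ) * τ)) (𝓝 Lp) ∧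
      Lp = (1 - γ) * Lm) := by
  obtain ⟨hγ0, hγ1⟩ := hγ
  set e : ℝ := Real.exp (-r * τ) with he
  set D : ℝ := 1 - (1 - γ) * e with hD
  have hepos : 0 < e := Real.exp_pos _
  have he1 : e < 1 := by
    rw [he]
    exact Real.exp_lt_one_iff.mpr (by nlinarith)
  have hDpos : 0 < D := by
    have : (1 - γ) * e < 1 := by nlinarith
    rw [hD]; linarith
  -- floor is constant on open periods
  have hfloor : ∀ (m : ℤ) (s : ℝ), (m : ℝ) * τ < s → s < ((m : ℝ) + 1) * τ →
      ⌊s / τ⌋ = m := by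
    intro m s h1 h2
    rw [Int.floor_eq_iff]
    constructor
    · exact le_of_lt ((lt_div_iff₀ hτ).mpr (by linarith))
    · exact (div_lt_iff₀ hτ).mpr (by push_cast; linarith)
  -- local model and its continuity / derivative
  have hgderiv : ∀ (c t : ℝ),
      HasDerivAt (fun s => 1 - γ * Real.exp (-r * (s - c)) / D)
        (r * γ * Real.exp (-r * (t - c)) / D) t := by
    intro c t
    have h1 : HasDerivAt (fun s : ℝ => -r * (s - c)) (-r) t := by
      simpa using ((hasDerivAt_id t).sub_const c).const_mul (-r)
    have h2 := h1.exp
    have h3 := ((h2.const_mul γ).div_const D).const_sub 1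
    refine h3.congr_deriv ?_
    ring
  constructor
  · intro t ht hnot
    set m : ℤ := ⌊t / τ⌋ with hm
    have hml : (m : ℝ) ≤ t / τ := Int.floor_le _
    have hmu : t / τ < (m : ℝ) + 1 := Int.lt_floor_add_one _
    have hne : t ≠ (m : ℝ) * τ := by
      intro hteq
      have hm0 : 0 ≤ m := by
        have : (0 : ℝ) ≤ (m : ℝ) := by
          by_contra hc
          push_neg at hc
          have : (m : ℝ) * τ < 0 := mul_neg_of_neg_of_pos hc hτ
          linarith [hteq ▸ ht]
        exact_mod_cast this
      exact hnot ⟨m.toNat, by rw [hteq]; congr 1; exact_mod_cast (Int.toNat_of_nonneg hm0).symm⟩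
    have hlt1 : (m : ℝ) * τ < t := by
      have : (m : ℝ) * τ ≤ t := by
        have := mul_le_mul_of_nonneg_right hml (le_of_lt hτ)
        rwa [div_mul_cancel₀ _ (ne_of_gt hτ)] at this
      exact lt_of_le_of_ne this (Ne.symm hne)
    have hlt2 : t < ((m : ℝ) + 1) * τ := by
      have := mul_lt_mul_of_pos_right hmu hτ
      rwa [div_mul_cancel₀ _ (ne_of_gt hτ)] at this
    have heq : Vper r τ γ =ᶠ[𝓝 t] fun s => 1 - γ * Real.exp (-r * (s - (m : ℝ) * τ)) / D := by
      filter_upwards [Ioo_mem_nhds hlt1 hlt2] with s hs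
      unfold Vper
      rw [hfloor m s hs.1 hs.2, ← he, ← hD]
    have hVt : Vper r τ γ t = 1 - γ * Real.exp (-r * (t - (m : ℝ) * τ)) / D := by
      unfold Vper; rw [← hm, ← he, ← hD]
    have := (hgderiv ((m : ℝ) * τ) t).congr_of_eventuallyEq heq
    refine this.congr_deriv ?_
    rw [hVt]; ring
  · intro n hn
    refine ⟨1 - γ * e / D, 1 - γ / D, ?_, ?_, ?_⟩
    · -- left limit
      have hlt : ((n : ℝ) - 1) * τ < (n : ℝ) * τ := by nlinarith
      have heq : (fun s => 1 - γ * Real.exp (-r * (s - ((n : ℝ) - 1) * τ)) / D)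
          =ᶠ[𝓝[<] ((n : ℝ) * τ)] Vper r τ γ := by
        filter_upwards [Ioo_mem_nhdsLT_of_mem ⟨hlt, le_refl _⟩] with s hs
        unfold Vper
        have : ⌊s / τ⌋ = (n : ℤ) - 1 := by
          apply hfloor
          · push_cast; exact hs.1
          · push_cast; linarith [hs.2]
        rw [this, ← he, ← hD]; push_cast; ring_nf
      refine Tendsto.congr' heq ?_
      have hcont : Tendsto (fun s => 1 - γ * Real.exp (-r * (s - ((n : ℝ) - 1) * τ)) / D)
          (𝓝 ((n : ℝ) * τ)) (𝓝 (1 - γ * Real.exp (-r * ((n : ℝ) * τ - ((n : ℝ) - 1) * τ)) / D)) := by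
        apply Continuous.tendsto
        continuity
      have : (n : ℝ) * τ - ((n : ℝ) - 1) * τ = τ := by ring
      rw [this, ← he] at hcont
      exact hcont.mono_left nhdsWithin_le_nhds
    · -- right limit
      have hlt : (n : ℝ) * τ < ((n : ℝ) + 1) * τ := by nlinarith
      have heq : (fun s => 1 - γ * Real.exp (-r * (s - (n : ℝ) * τ)) / D)
          =ᶠ[𝓝[>] ((n : ℝ) * τ)] Vper r τ γ := by
        filter_upwards [Ioo_mem_nhdsGT_of_mem ⟨le_refl _, hlt⟩] with s hs
        unfold Vper
        have : ⌊s / τ⌋ = (n : ℤ) := by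
          apply hfloor
          · push_cast; exact hs.1
          · push_cast; linarith [hs.2]
        rw [this, ← he, ← hD]; push_cast; ring_nf
      refine Tendsto.congr' heq ?_
      have hcont : Tendsto (fun s => 1 - γ * Real.exp (-r * (s - (n : ℝ) * τ)) / D)
          (𝓝 ((n : ℝ) * τ)) (𝓝 (1 - γ * Real.exp (-r * ((n : ℝ) * τ - (n : ℝ) * τ)) / D)) := by
        apply Continuous.tendsto
        continuity
      have : (n : ℝ) * τ - (n : ℝ) * τ = 0 := by ring
      rw [this] at hcont
      simpa using hcont.mono_left nhdsWithin_le_nhds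
    · -- jump relation
      rw [hD]
      field_simp [show 1 - (1 - γ) * e ≠ 0 from hDpos.ne']
      ring
end

section
/- If A is a cooperative (Metzler) n×n matrix and all principal minors of -A are positive, then every eigenvalue of A has negative real part (i.e., s(A) < 0). -/
/-!
Let `μ` be an eigenvalue with `0 ≤ re μ` and eigenvector `v`. The triangle inequality and the
sign pattern of `A` give `A |v| ≥ (re μ) |v| ≥ 0`, so `x = |v|` is nonzero with `x ≥ 0` and
`(-A) x ≤ 0`. This cannot happen for a P-matrix `M = -A`. Adding a nonnegative diagonal matrix
to a P-matrix gives a P-matrix, since each principal minor is affine in a diagonal entry with a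
smaller principal minor as its slope. But with `dᵢ = -(M x)ᵢ / xᵢ` on the support `S` of `x`,
the principal submatrix of `M + diagonal d` on `S` annihilates `x` restricted to `S`.
-/

open Matrix

namespace Matrix

variable {ι R : Type*} [DecidableEq ι]

/-- Its determinant is the principal minor of `M` on `S` (`det_unitRowsOutside`), but unlike the
submatrix it has the same index type for every `S`, so it can be changed one row at a time. -/
def unitRowsOutside [Zero R] [One R] (M : Matrix ι ι R) (S : Finset ι) : Matrix ι ι R :=
  of fun i => if i ∈ S then M i else (1 : Matrix ι ι R) i

theorem unitRowsOutside_add_diagonal_single_of_notMem [AddZeroClass R] [One R]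
    (M : Matrix ι ι R) {S : Finset ι} {a : ι} (ha : a ∉ S) (t : R) :
    (M + diagonal (Pi.single a t)).unitRowsOutside S = M.unitRowsOutside S := by
  ext i j
  by_cases hi : i ∈ S
  · simp [unitRowsOutside, hi, diagonal_apply, ne_of_mem_of_not_mem hi ha]
  · simp [unitRowsOutside, hi]

variable [Fintype ι]

theorem unitRowsOutside_mulVec [NonAssocSemiring R] (M : Matrix ι ι R) (S : Finset ι)
    (x : ι → R) (i : ι) :
    (M.unitRowsOutside S *ᵥ x) i = if i ∈ S then (M *ᵥ x) i else x i := by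
  by_cases hi : i ∈ S
  · simp [unitRowsOutside, mulVec, hi]
  · simp [unitRowsOutside, hi, mulVec, one_apply, dotProduct]

theorem det_unitRowsOutside [CommRing R] (M : Matrix ι ι R) (S : Finset ι) :
    (M.unitRowsOutside S).det = (M.submatrix ((↑) : S → ι) (↑)).det := by
  rw [twoBlockTriangular_det _ (· ∈ S)]
  · have hS : toSquareBlockProp (M.unitRowsOutside S) (· ∈ S) = M.submatrix (↑) (↑) := by
      ext i j
      simp [toSquareBlockProp, toBlock, unitRowsOutside, i.2]
    have hSc : toSquareBlockProp (M.unitRowsOutside S) (· ∉ S) = 1 := by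
      ext i j
      simp [toSquareBlockProp, toBlock, unitRowsOutside, i.2, one_apply, Subtype.ext_iff]
    rw [hS, hSc, det_one, mul_one]
    -- the two sides use different `Fintype` instances on `S`
    convert rfl
  · intro i hi j hj
    simp [unitRowsOutside, hi, (ne_of_mem_of_not_mem hj hi).symm]

theorem det_unitRowsOutside_add_diagonal_single [CommRing R] (M : Matrix ι ι R)
    {S : Finset ι} {a : ι} (ha : a ∈ S) (t : R) :
    ((M + diagonal (Pi.single a t)).unitRowsOutside S).det =
      (M.unitRowsOutside S).det + t * (M.unitRowsOutside (S.erase a)).det := by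
  have hrow : (M + diagonal (Pi.single a t)).unitRowsOutside S =
      (M.unitRowsOutside S).updateRow a (M.unitRowsOutside S a + t • (1 : Matrix ι ι R) a) := by
    ext i j
    by_cases hi : i = a
    · subst hi
      simp [unitRowsOutside, ha, diagonal_apply, one_apply]
    · by_cases hiS : i ∈ S <;> simp [unitRowsOutside, hi, hiS, diagonal_apply]
  have herase : (M.unitRowsOutside S).updateRow a ((1 : Matrix ι ι R) a) =
      M.unitRowsOutside (S.erase a) := by
    ext i j
    by_cases hi : i = a
    · subst hi; simp [unitRowsOutside]
    · simp [unitRowsOutside, hi]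
  rw [hrow, det_updateRow_add, updateRow_eq_self, det_updateRow_smul, herase]

def IsPMatrix [CommRing R] [PartialOrder R] (M : Matrix ι ι R) : Prop :=
  ∀ S : Finset ι, 0 < (M.submatrix ((↑) : S → ι) (↑)).det

section Ordered

variable [CommRing R] [PartialOrder R] {M : Matrix ι ι R}

theorem IsPMatrix.det_unitRowsOutside_pos (hM : M.IsPMatrix) (S : Finset ι) :
    0 < (M.unitRowsOutside S).det :=
  det_unitRowsOutside M S ▸ hM S

variable [IsStrictOrderedRing R]

theorem IsPMatrix.add_diagonal_single (hM : M.IsPMatrix) (a : ι) {t : R} (ht : 0 ≤ t) :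
    (M + diagonal (Pi.single a t)).IsPMatrix := by
  intro S
  rw [← det_unitRowsOutside]
  by_cases ha : a ∈ S
  · rw [det_unitRowsOutside_add_diagonal_single M ha]
    exact add_pos_of_pos_of_nonneg (hM.det_unitRowsOutside_pos S)
      (mul_nonneg ht (hM.det_unitRowsOutside_pos _).le)
  · rw [unitRowsOutside_add_diagonal_single_of_notMem M ha]
    exact hM.det_unitRowsOutside_pos S

theorem IsPMatrix.add_diagonal (hM : M.IsPMatrix) {d : ι → R} (hd : 0 ≤ d) :
    (M + diagonal d).IsPMatrix := by
  suffices ∀ s : Finset ι, (M + diagonal (∑ a ∈ s, Pi.single a (d a))).IsPMatrix by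
    simpa only [Finset.univ_sum_single] using this Finset.univ
  intro s
  induction s using Finset.induction_on with
  | empty => simpa using hM
  | insert a s ha ih =>
    have hsplit : diagonal (∑ b ∈ insert a s, Pi.single b (d b)) =
        diagonal (∑ b ∈ s, Pi.single b (d b)) + diagonal (Pi.single a (d a)) := by
      rw [Finset.sum_insert ha, add_comm]
      exact (diagonal_add _ _).symm
    rw [hsplit, ← add_assoc]
    exact ih.add_diagonal_single a (hd a)

end Ordered

theorem IsPMatrix.eq_zero_of_mul_mulVec_nonpos
    [Field R] [LinearOrder R] [IsStrictOrderedRing R] {M : Matrix ι ι R} (hM : M.IsPMatrix)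
    {x : ι → R} (hx : ∀ i, x i * (M *ᵥ x) i ≤ 0) :
    x = 0 := by
  by_contra hx0
  -- `d i = -(M *ᵥ x) i / x i` where `x i ≠ 0`, written so that its sign is visible
  set d : ι → R := fun i => -(x i * (M *ᵥ x) i) / x i ^ 2
  have hd : 0 ≤ d := fun i => div_nonneg (neg_nonneg.mpr (hx i)) (sq_nonneg _)
  set S := Finset.univ.filter (fun i => x i ≠ 0)
  have hker : (M + diagonal d).unitRowsOutside S *ᵥ x = 0 := by
    ext i
    rw [unitRowsOutside_mulVec, add_mulVec]
    by_cases hi : x i = 0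
    · simp [S, hi]
    · simp only [S, Finset.mem_filter, Finset.mem_univ, true_and, if_pos hi, Pi.add_apply,
        mulVec_diagonal, d, Pi.zero_apply]
      field_simp
      ring
  exact ((hM.add_diagonal hd).det_unitRowsOutside_pos S).ne'
    (exists_mulVec_eq_zero_iff.mp ⟨x, hx0, hker⟩)

theorem re_mul_norm_le_mulVec_norm {A : Matrix ι ι ℝ} (hA : ∀ i j, i ≠ j → 0 ≤ A i j)
    {μ : ℂ} {v : ι → ℂ} (hv : A.map (↑) *ᵥ v = μ • v) (i : ι) :
    μ.re * ‖v i‖ ≤ (A *ᵥ fun j => ‖v j‖) i := by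
  have hrow : μ * v i = ∑ j, (A i j : ℂ) * v j := by
    simpa [mulVec, dotProduct] using (congrFun hv i).symm
  rw [← Finset.add_sum_erase _ _ (Finset.mem_univ i)] at hrow
  have hoff : ‖(μ - A i i) * v i‖ ≤ ∑ j ∈ Finset.univ.erase i, A i j * ‖v j‖ := by
    rw [show (μ - A i i) * v i = ∑ j ∈ Finset.univ.erase i, A i j * v j by
      linear_combination hrow]
    refine norm_sum_le_of_le _ fun j hj => ?_
    rw [norm_mul, Complex.norm_real, Real.norm_of_nonneg (hA i j (Finset.ne_of_mem_erase hj).symm)]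
  have hre : (μ.re - A i i) * ‖v i‖ ≤ ‖(μ - A i i) * v i‖ := by
    rw [norm_mul]
    exact mul_le_mul_of_nonneg_right (by simpa using Complex.re_le_norm (μ - A i i))
      (norm_nonneg _)
  have hAx : (A *ᵥ fun j => ‖v j‖) i = ∑ j, A i j * ‖v j‖ := rfl
  rw [← Finset.add_sum_erase _ _ (Finset.mem_univ i)] at hAx
  linarith

end Matrix

/-- If `A` is Metzler (cooperative) and all principal minors of `-A` are
positive, then every eigenvalue of `A` has negative real part. -/
theorem metzler_minors_pos_implies_stable
    {n : ℕ} (A : Matrix (Fin n) (Fin n) ℝ)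
    (hMetzler : ∀ i j : Fin n, i ≠ j → 0 ≤ A i j)
    (hminors : ∀ S : Finset (Fin n), S.Nonempty →
      0 < ((-A).submatrix (Subtype.val : {x // x ∈ S} → Fin n)
            (Subtype.val : {x // x ∈ S} → Fin n)).det) :
    ∀ μ : ℂ, (μ • (1 : Matrix (Fin n) (Fin n) ℂ)
      - A.map (Complex.ofReal ·)).det = 0 → μ.re < 0 := by
  intro μ hdet
  obtain ⟨v, hv0, hv⟩ := exists_mulVec_eq_zero_iff.mpr hdet
  rw [sub_mulVec, smul_mulVec, one_mulVec, sub_eq_zero] at hv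
  by_contra! hre
  have hP : (-A).IsPMatrix := fun S =>
    S.eq_empty_or_nonempty.elim (by rintro rfl; simp) (hminors S)
  have hnorm : (fun j => ‖v j‖) = 0 := hP.eq_zero_of_mul_mulVec_nonpos fun i => by
    have := re_mul_norm_le_mulVec_norm hMetzler hv.symm i
    rw [neg_mulVec, Pi.neg_apply]
    exact mul_nonpos_of_nonneg_of_nonpos (norm_nonneg _)
      (neg_nonpos.mpr ((mul_nonneg hre (norm_nonneg _)).trans this))
  exact hv0 (funext fun j => norm_eq_zero.mp (congrFun hnorm j))
end
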